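/- arXiv:1207.6481 — 2 statements merged into one kernel-verified Lean document; each statement's English description precedes it below -/
import Mathlib

section
/- For all nonnegative integers n, the alternating binomial sum ∑_{i=0}^{⌊n/2⌋} (-1)^i * C(n-i, i) * C(2n-2i, n-i) equals 2^n. -/
open Polynomial Finset

noncomputable def T (n i : ℕ) : Polynomial ℤ :=
  (((-1 : ℤ) ^ i * ((n - i).choose i) : ℤ) : Polynomial ℤ) * (X ^ i * (X + 1) ^ (n - 2 * i))

lemma T_step (n i : ℕ) :
    T (n + 2) (i + 1) = (X + 1) * T (n + 1) (i + 1) - X * T n i := by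
  unfold T
  rcases le_or_gt i n with hin | hin
  · have h1 : n + 2 - (i + 1) = (n - i) + 1 := by omega
    have h2 : n + 1 - (i + 1) = n - i := by omega
    rw [h1, h2, Nat.choose_succ_succ]
    have h3 : n + 2 - 2 * (i + 1) = n - 2 * i := by omega
    rw [h3]
    rcases le_or_gt n (2 * i) with h | h
    · have ha : (n - i).choose (i + 1) = 0 := Nat.choose_eq_zero_of_lt (by omega)
      rw [ha]
      have h4 : n + 1 - 2 * (i + 1) = 0 := by omega
      rw [h4]
      push_cast
      ring
    · have h4 : n + 1 - 2 * (i + 1) = (n - 2 * i) - 1 := by omega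
      have h5 : (n - 2 * i - 1) + 1 = n - 2 * i := by omega
      rw [h4, ← h5]
      push_cast
      ring
  · have h1 : (n + 2 - (i + 1)).choose (i + 1) = 0 :=
      Nat.choose_eq_zero_of_lt (by omega)
    have h2 : (n + 1 - (i + 1)).choose (i + 1) = 0 :=
      Nat.choose_eq_zero_of_lt (by omega)
    have h3 : (n - i).choose i = 0 := by
      have : n - i = 0 := by omega
      rw [this]
      exact Nat.choose_eq_zero_of_lt (by omega)
    rw [h1, h2, h3]
    push_cast
    ring

noncomputable def P (n : ℕ) : Polynomial ℤ := ∑ i ∈ Finset.range (n + 1), T n i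

lemma P_rec (n : ℕ) : P (n + 2) = (X + 1) * P (n + 1) - X * P n := by
  unfold P
  rw [Finset.sum_range_succ' (fun i => T (n + 2) i)]
  have e1 : ∀ i ∈ Finset.range (n + 2), T (n + 2) (i + 1)
      = (X + 1) * T (n + 1) (i + 1) - X * T n i := fun i _ => T_step n i
  rw [Finset.sum_congr rfl e1, Finset.sum_sub_distrib, ← Finset.mul_sum, ← Finset.mul_sum]
  have hT0 : ∀ m k, m < k → T m k = 0 := by
    intro m k hk
    unfold T
    have h1 : m - k = 0 := by omega
    have : (m - k).choose k = 0 := by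
      rw [h1]; exact Nat.choose_eq_zero_of_lt (by omega)
    rw [this]; push_cast; ring
  have e2 : ∑ i ∈ Finset.range (n + 2), T (n + 1) (i + 1)
      = (∑ i ∈ Finset.range (n + 2), T (n + 1) i) - T (n + 1) 0 := by
    rw [Finset.sum_range_succ (fun i => T (n + 1) (i + 1)) (n + 1),
      Finset.sum_range_succ' (fun i => T (n + 1) i) (n + 1), hT0 (n + 1) (n + 2) (by omega)]
    ring
  have e3 : ∑ i ∈ Finset.range (n + 2), T n i
      = (∑ i ∈ Finset.range (n + 1), T n i) + T n (n + 1) := Finset.sum_range_succ _ _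
  have e4 : T n (n + 1) = 0 := hT0 n (n + 1) (by omega)
  have e5 : T (n + 2) 0 = (X + 1) * T (n + 1) 0 := by
    unfold T
    simp only [Nat.sub_zero, Nat.choose_zero_right, Nat.mul_zero, pow_zero]
    push_cast
    ring
  rw [e2, e3, e4, e5]
  ring

lemma P_geom (n : ℕ) : P n = ∑ j ∈ Finset.range (n + 1), (X : Polynomial ℤ) ^ j := by
  induction n using Nat.strong_induction_on with
  | _ n ih =>
    match n with
    | 0 => simp [P, T]
    | 1 =>
      rw [P]
      rw [Finset.sum_range_succ, Finset.sum_range_one]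
      unfold T
      norm_num
    | (n + 2) =>
      rw [P_rec, ih (n + 1) (by omega), ih n (by omega)]
      have h : (∑ j ∈ Finset.range (n + 1 + 1), (X : Polynomial ℤ) ^ j)
          = (∑ j ∈ Finset.range (n + 1), (X : Polynomial ℤ) ^ j) + X ^ (n + 1) :=
        Finset.sum_range_succ _ _
      rw [h, Finset.sum_range_succ (fun j => (X : Polynomial ℤ) ^ j) (n + 2), h]
      ring

theorem alternating_binomial_sum (n : ℕ) :
    ∑ i ∈ Finset.range (n / 2 + 1),
      (-1 : ℤ) ^ i * ((n - i).choose i) * ((2 * n - 2 * i).choose (n - i)) = 2 ^ n := by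
  have hext : ∑ i ∈ Finset.range (n / 2 + 1),
      (-1 : ℤ) ^ i * ((n - i).choose i) * ((2 * n - 2 * i).choose (n - i))
      = ∑ i ∈ Finset.range (n + 1),
      (-1 : ℤ) ^ i * ((n - i).choose i) * ((2 * n - 2 * i).choose (n - i)) := by
    apply Finset.sum_subset
    · intro x hx
      simp only [Finset.mem_range] at *
      omega
    · intro x hx hnx
      simp only [Finset.mem_range] at *
      have : (n - x).choose x = 0 := Nat.choose_eq_zero_of_lt (by omega)
      rw [this]
      push_cast
      ring
  rw [hext]
  have key : ∀ i ∈ Finset.range (n + 1),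
      (-1 : ℤ) ^ i * ((n - i).choose i) * ((2 * n - 2 * i).choose (n - i))
      = ((X + 1) ^ n * T n i).coeff n := by
    intro i hi
    simp only [Finset.mem_range] at hi
    unfold T
    rcases le_or_gt (2 * i) n with h | h
    · have hp : (X + 1 : Polynomial ℤ) ^ n * ((((-1 : ℤ) ^ i * ((n - i).choose i) : ℤ) :
          Polynomial ℤ) * (X ^ i * (X + 1) ^ (n - 2 * i)))
          = (((-1 : ℤ) ^ i * ((n - i).choose i) : ℤ) : Polynomial ℤ) *
            (X ^ i * (X + 1) ^ (2 * n - 2 * i)) := by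
        have : 2 * n - 2 * i = n + (n - 2 * i) := by omega
        rw [this, pow_add]
        ring
      rw [hp, ← Polynomial.C_eq_intCast, Polynomial.coeff_C_mul]
      have e := Polynomial.coeff_X_pow_mul ((X + 1 : Polynomial ℤ) ^ (2 * n - 2 * i)) i (n - i)
      rw [show n - i + i = n from by omega] at e
      rw [e, Polynomial.coeff_X_add_one_pow]
      push_cast
      ring
    · have hc : (n - i).choose i = 0 := Nat.choose_eq_zero_of_lt (by omega)
      rw [hc]
      push_cast
      simp
  rw [Finset.sum_congr rfl key, ← Polynomial.finset_sum_coeff]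
  have : ∑ i ∈ Finset.range (n + 1), (X + 1 : Polynomial ℤ) ^ n * T n i
      = (X + 1) ^ n * P n := by rw [P, Finset.mul_sum]
  rw [this, P_geom, Finset.mul_sum, Polynomial.finset_sum_coeff]
  have c2 : ∀ j ∈ Finset.range (n + 1),
      ((X + 1 : Polynomial ℤ) ^ n * X ^ j).coeff n = (n.choose (n - j) : ℤ) := by
    intro j hj
    simp only [Finset.mem_range] at hj
    have e := Polynomial.coeff_X_pow_mul ((X + 1 : Polynomial ℤ) ^ n) j (n - j)
    rw [show n - j + j = n from by omega] at e
    rw [mul_comm, e, Polynomial.coeff_X_add_one_pow]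
  rw [Finset.sum_congr rfl c2]
  rw [← Finset.sum_range_reflect (fun j => (n.choose (n - j) : ℤ)) (n + 1)]
  have : ∀ j ∈ Finset.range (n + 1), (n.choose (n - (n + 1 - 1 - j)) : ℤ) = (n.choose j : ℤ) := by
    intro j hj
    simp only [Finset.mem_range] at hj
    have h : n - (n + 1 - 1 - j) = j := by omega
    rw [h]
  rw [Finset.sum_congr rfl this]
  have := Nat.sum_range_choose n
  exact_mod_cast congrArg (Nat.cast : ℕ → ℤ) this
end

section
/- Define polynomials q_k ∈ ℝ[s,t] by the formal power series expansion -1/(1 + t·x + s·x²)² = ∑_{k≥0} q_k(s,t)·x^k. Then q_k = (-1)^{k+1} · ∑_{q=0}^{⌊k/2⌋} (-1)^q · (q+1) · C(k+1-q, q+1) · s^q · t^{k-2q}. -/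
/-!
Write `1 + t x + s x² = 1 + u` with `u = x (t + s x)`. Then `-1/(1 + u)² = ∑ₘ (-1)^(m+1) (m+1) uᵐ`,
only `m ≤ k` contributes to `xᵏ`, and by the binomial theorem the coefficient of `xᵏ` in
`uᵐ = xᵐ (t + s x)ᵐ` is `C(m, k-m) s^(k-m) t^(2m-k)`. Substituting `q = k - m` and using
`(k-q+1) C(k-q, q) = (q+1) C(k+1-q, q+1)` gives the formula. Over an arbitrary commutative ring the
expansion is replaced by the telescoping identity
`(1 + u)² ∑_{m ≤ k} (-1)^m (m+1) uᵐ = 1 + O(u^(k+1))` and the fact that `(1 + u)²` is a unit.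
-/

noncomputable section

/-- The polynomial ring ℝ[s,t]. -/
abbrev Rst : Type := MvPolynomial (Fin 2) ℝ

def s : Rst := MvPolynomial.X 0
def t : Rst := MvPolynomial.X 1

open PowerSeries Finset

section

variable {R : Type*} [CommRing R]

theorem one_add_sq_mul_sum_neg_one_pow_succ_mul_pow (u : R) (M : ℕ) :
    (1 + u) ^ 2 * ∑ m ∈ range M, (-1) ^ m * ((m : R) + 1) * u ^ m
      = 1 - (-1) ^ M * ((M + 1) * u ^ M + M * u ^ (M + 1)) := by
  induction M with
  | zero => simp
  | succ M ih => rw [sum_range_succ, mul_add, ih]; push_cast; ring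

theorem PowerSeries.coeff_eq_zero_of_mul_eq_X_pow_mul {f g h : R⟦X⟧} {M k : ℕ}
    (hf : IsUnit (constantCoeff f)) (hfg : f * g = X ^ M * h) (hk : k < M) :
    coeff k g = 0 := by
  obtain ⟨w, rfl⟩ := isUnit_iff_constantCoeff.2 hf
  have : g = X ^ M * ((↑w⁻¹ : R⟦X⟧) * h) := by
    rw [mul_left_comm, ← hfg, ← mul_assoc, Units.inv_mul, one_mul]
  rw [this, coeff_X_pow_mul', if_neg hk.not_ge]

theorem PowerSeries.coeff_eq_of_one_add_X_mul_sq_mul_eq_neg_one {v N : R⟦X⟧}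
    (hN : (1 + X * v) ^ 2 * N = -1) (k : ℕ) :
    coeff k N = -∑ m ∈ range (k + 1), (-1) ^ m * ((m : R) + 1) * coeff (k - m) (v ^ m) := by
  set S := ∑ m ∈ range (k + 1), C ((-1) ^ m * ((m : R) + 1)) * (X * v) ^ m
  have hS : (1 + X * v) ^ 2 * (N + S) = X ^ (k + 1) *
      -((-1) ^ (k + 1) *
        (((k : R⟦X⟧) + 2) * v ^ (k + 1) + ((k : R⟦X⟧) + 1) * X * v ^ (k + 2))) := by
    have htele := one_add_sq_mul_sum_neg_one_pow_succ_mul_pow (X * v) (k + 1)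
    simp only [S, map_mul, map_pow, map_neg, map_one, map_add, map_natCast]
    rw [mul_add, hN, htele]
    push_cast
    ring
  have hunit : IsUnit (constantCoeff ((1 + X * v) ^ 2)) := by simp
  have h0 := coeff_eq_zero_of_mul_eq_X_pow_mul hunit hS (Nat.lt_succ_self k)
  rw [map_add, add_eq_zero_iff_eq_neg] at h0
  rw [h0, map_sum]
  congr 1
  refine sum_congr rfl fun m hm => ?_
  rw [coeff_C_mul, mul_pow, coeff_X_pow_mul', if_pos (Nat.lt_succ_iff.1 (mem_range.1 hm))]

theorem PowerSeries.coeff_C_add_C_mul_X_pow (a b : R) (m j : ℕ) :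
    coeff j ((C a + C b * X) ^ m) = m.choose j * a ^ (m - j) * b ^ j := by
  rw [add_comm, add_pow, map_sum]
  have hterm (i : ℕ) : C b ^ i * X ^ i * C a ^ (m - i) * (m.choose i : R⟦X⟧)
      = C (m.choose i * a ^ (m - i) * b ^ i) * X ^ i := by
    simp only [map_mul, map_pow, map_natCast]; ring
  simp_rw [mul_pow, hterm, coeff_C_mul_X_pow, sum_ite_eq, mem_range]
  split_ifs with hj
  · rfl
  · rw [Nat.choose_eq_zero_of_lt (by omega), Nat.cast_zero, zero_mul, zero_mul]

theorem PowerSeries.coeff_eq_of_one_add_C_mul_X_add_C_mul_X_sq_sq_mul_eq_neg_one {a b : R}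
    {N : R⟦X⟧} (hN : ((1 : R⟦X⟧) + C a * X + C b * X ^ 2) ^ 2 * N = -1) (k : ℕ) :
    coeff k N = (-1) ^ (k + 1) * ∑ q ∈ range (k / 2 + 1),
      (-1) ^ q * ((q + 1 : ℕ) : R) * ((k + 1 - q).choose (q + 1) : R) * b ^ q *
        a ^ (k - 2 * q) := by
  rw [show (1 : R⟦X⟧) + C a * X + C b * X ^ 2 = 1 + X * (C a + C b * X) by ring] at hN
  rw [coeff_eq_of_one_add_X_mul_sq_mul_eq_neg_one hN, ← sum_range_reflect, mul_sum,
    ← sum_neg_distrib, ← sum_subset (range_subset_range.2 (show k / 2 + 1 ≤ k + 1 by omega))]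
  · refine sum_congr rfl fun q hq => ?_
    have hq2 : q < k / 2 + 1 := mem_range.1 hq
    obtain ⟨r, rfl⟩ : ∃ r, k = q + r := ⟨k - q, by omega⟩
    simp only [add_tsub_cancel_right, add_tsub_cancel_left, coeff_C_add_C_mul_X_pow,
      show q + r + 1 - q = r + 1 by omega, show q + r - 2 * q = r - q by omega]
    have hchoose : ((r : R) + 1) * r.choose q = (r + 1).choose (q + 1) * (q + 1 : ℕ) := by
      rw [← Nat.cast_add_one, ← Nat.cast_mul, Nat.add_one_mul_choose_eq, Nat.cast_mul]
    have hsign : ((-1 : R) ^ q) ^ 2 = 1 := by rw [← pow_mul, pow_mul', neg_one_sq, one_pow]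
    linear_combination (-1 : R) ^ r * a ^ (r - q) * b ^ q *
      (((r + 1).choose (q + 1) * (q + 1 : ℕ) : R) * hsign - hchoose)
  · intro q hq hq'
    simp only [mem_range] at hq hq'
    rw [coeff_C_add_C_mul_X_pow, Nat.choose_eq_zero_of_lt (by omega)]
    simp

end

/-- If `N = -1/(1+t·x+s·x²)²` in `ℝ[s,t][[x]]`, i.e. `(1+t·x+s·x²)² · N = -1`,
with coefficients `q_k`, then
`q_k = (-1)^{k+1} ∑_{q=0}^{⌊k/2⌋} (-1)^q (q+1) C(k+1-q,q+1) s^q t^{k-2q}`. -/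
theorem qk_explicit (N : PowerSeries Rst)
    (hN : ((1 : PowerSeries Rst) + PowerSeries.C t * PowerSeries.X
        + PowerSeries.C s * PowerSeries.X ^ 2) ^ 2 * N = -1) (k : ℕ) :
    PowerSeries.coeff k N
      = (-1 : Rst) ^ (k + 1) * ∑ q ∈ Finset.range (k / 2 + 1),
          (-1 : Rst) ^ q * ((q + 1 : ℕ) : Rst) * ((k + 1 - q).choose (q + 1) : Rst)
            * s ^ q * t ^ (k - 2 * q) :=
  coeff_eq_of_one_add_C_mul_X_add_C_mul_X_sq_sq_mul_eq_neg_one hN k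
end
end
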